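/- For the BGW distribution, the conditional survival function of Y given X = x is P(Y > y | X = x) = e^{-b₂y^a}(1-e^{-Z(x,y)})^{θ-1} / (1-e^{-b₁x^a})^{θ-1}, where Z(x,y) = b₁x^a + b₂y^a. -/

import Mathlib

open Real

/-! `S(x, y) = 1 - (1 - e^{-Z})^θ` with `Z = b₁ x^a + b₂ y^a`, so the chain rule gives
`-∂S/∂x = θ (1 - e^{-Z})^{θ-1} e^{-Z} · a b₁ x^{a-1}`. Dividing by `f_X(x)` cancels
`θ a b₁ x^{a-1}`, and `e^{-Z} / e^{-b₁ x^a} = e^{-b₂ y^a}`. -/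

/-- The BGW joint survival function. -/
noncomputable def bgwSurv (a b₁ b₂ θ : ℝ) (x y : ℝ) : ℝ :=
  1 - (1 - exp (-(b₁ * x ^ a + b₂ * y ^ a))) ^ θ

/-- The marginal density of `X` under BGW. -/
noncomputable def bgwMarginalDensity (a b θ : ℝ) (x : ℝ) : ℝ :=
  θ * a * b * x ^ (a - 1) * exp (-(b * x ^ a)) * (1 - exp (-(b * x ^ a))) ^ (θ - 1)

theorem one_sub_exp_neg_pos {z : ℝ} (hz : 0 < z) : 0 < 1 - exp (-z) := by
  have : exp (-z) < 1 := exp_lt_one_iff.mpr (neg_lt_zero.mpr hz)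
  linarith

theorem hasDerivAt_one_sub_exp_neg_rpow {g : ℝ → ℝ} {g' x : ℝ} (θ : ℝ)
    (hg : HasDerivAt g g' x) (hgx : 1 - exp (-g x) ≠ 0) :
    HasDerivAt (fun t => (1 - exp (-g t)) ^ θ)
      (θ * (1 - exp (-g x)) ^ (θ - 1) * (exp (-g x) * g')) x := by
  have hbase : HasDerivAt (fun t => 1 - exp (-g t)) (exp (-g x) * g') x :=
    (hg.neg.exp.const_sub 1).congr_deriv (by rw [Pi.neg_apply]; ring)
  exact (hbase.rpow_const (Or.inl hgx)).congr_deriv (by ring)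

theorem hasDerivAt_weibull_exponent (a b c : ℝ) {x : ℝ} (hx : 0 < x) :
    HasDerivAt (fun t : ℝ => b * t ^ a + c) (a * b * x ^ (a - 1)) x :=
  (((hasDerivAt_rpow_const (Or.inl hx.ne')).const_mul b).add_const c).congr_deriv (by ring)

theorem hasDerivAt_bgwSurv_fst (a b₁ b₂ θ : ℝ) {x y : ℝ} (hx : 0 < x)
    (hZ : 0 < b₁ * x ^ a + b₂ * y ^ a) :
    HasDerivAt (fun t => bgwSurv a b₁ b₂ θ t y)
      (-(θ * (1 - exp (-(b₁ * x ^ a + b₂ * y ^ a))) ^ (θ - 1) *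
        (exp (-(b₁ * x ^ a + b₂ * y ^ a)) * (a * b₁ * x ^ (a - 1))))) x :=
  (hasDerivAt_one_sub_exp_neg_rpow θ (hasDerivAt_weibull_exponent a b₁ (b₂ * y ^ a) hx)
    (one_sub_exp_neg_pos hZ).ne').const_sub 1

theorem bgw_conditional_survival_general (a b₁ b₂ θ : ℝ) (ha : 0 < a) (hb₁ : 0 < b₁) (hb₂ : 0 < b₂)
    (hθ0 : 0 < θ) (x y : ℝ) (hx : 0 < x) (hy : 0 < y) :
    -(deriv (fun x' : ℝ => bgwSurv a b₁ b₂ θ x' y) x) / bgwMarginalDensity a b₁ θ x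
      = exp (-(b₂ * y ^ a)) * (1 - exp (-(b₁ * x ^ a + b₂ * y ^ a))) ^ (θ - 1)
          / (1 - exp (-(b₁ * x ^ a))) ^ (θ - 1) := by
  have hx₁ : 0 < b₁ * x ^ a := mul_pos hb₁ (rpow_pos_of_pos hx a)
  have hZ : 0 < b₁ * x ^ a + b₂ * y ^ a := add_pos hx₁ (mul_pos hb₂ (rpow_pos_of_pos hy a))
  have hsplit : exp (-(b₁ * x ^ a + b₂ * y ^ a)) = exp (-(b₁ * x ^ a)) * exp (-(b₂ * y ^ a)) := by
    rw [← exp_add, neg_add]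
  rw [(hasDerivAt_bgwSurv_fst a b₁ b₂ θ hx hZ).deriv, bgwMarginalDensity, hsplit]
  have hpow : (1 - exp (-(b₁ * x ^ a))) ^ (θ - 1) ≠ 0 :=
    (rpow_pos_of_pos (one_sub_exp_neg_pos hx₁) _).ne'
  have hxa : x ^ (a - 1) ≠ 0 := (rpow_pos_of_pos hx _).ne'
  have hexp : exp (-(b₁ * x ^ a)) ≠ 0 := (exp_pos _).ne'
  field_simp

/-- The conditional survival function of `Y` given `X = x`, namely
`-(∂S(x,y)/∂x)/f_X(x)`, equals
`e^{-b₂y^a}(1-e^{-Z(x,y)})^{θ-1} / (1-e^{-b₁x^a})^{θ-1}`. -/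
theorem bgw_conditional_survival (a b₁ b₂ θ : ℝ) (ha : 0 < a) (hb₁ : 0 < b₁) (hb₂ : 0 < b₂)
    (hθ0 : 0 < θ) (hθ1 : θ ≤ 1) (x y : ℝ) (hx : 0 < x) (hy : 0 < y) :
    -(deriv (fun x' : ℝ => bgwSurv a b₁ b₂ θ x' y) x) / bgwMarginalDensity a b₁ θ x
      = exp (-(b₂ * y ^ a)) * (1 - exp (-(b₁ * x ^ a + b₂ * y ^ a))) ^ (θ - 1)
          / (1 - exp (-(b₁ * x ^ a))) ^ (θ - 1) :=
  bgw_conditional_survival_general a b₁ b₂ θ ha hb₁ hb₂ hθ0 x y hx hy
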